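/- arXiv:1810.11107 — 2 statements merged into one kernel-verified Lean document; each statement's English description precedes it below -/
import Mathlib

section
/- Let p≥1 and let f_0 = 1_{(0,1)} be the uniform density on (0,1). Assume K:ℝ→ℝ is a kernel (∫_ℝ K = 1) with Supp(K)⊆[−1,1] and that there exist 0<δ<1 and 0<γ<1 such that ∫_{−1}^a K(u)du ≤ 1−γ for every 0≤a≤δ. Then for any 0<h<(1+δ)^{−1}, the integrated bias of the convolution kernel estimator satisfies ‖E_{f_0}^n(f̂_h) − f_0‖_p ≥ δ^{1/p}·γ·h^{1/p}. -/
/-! Because `K` vanishes outside `[-1, 1]` and `h (1 + δ) < 1`, for `0 < t ≤ δ h` the mean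
`E f̂_h(t) = ∫_{(t-1)/h}^{t/h} K` reduces to `∫_{-1}^{t/h} K ≤ 1 - γ`, while `f₀(t) = 1`.
So the bias is at least `γ` on an interval of length `δ h`, and its `L_p` norm is at least
`(δ h)^{1/p} γ`. -/

open MeasureTheory Real Filter

noncomputable section

namespace Adaptive

/-- The measure on `ℝ` with Lebesgue density `f`. -/
def densMeasure1 (f : ℝ → ℝ) : Measure ℝ :=
  volume.withDensity fun x => ENNReal.ofReal (f x)

/-- The law of `n` i.i.d. observations with density `f`. -/
def prodLaw1 (n : ℕ) (f : ℝ → ℝ) : Measure (Fin n → ℝ) :=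
  Measure.pi fun _ => densMeasure1 f

/-- `f` is a probability density on `[0,1]`. -/
def IsDensity01 (f : ℝ → ℝ) : Prop :=
  (∀ x, 0 ≤ f x) ∧ (∀ x, x ∉ Set.Icc (0:ℝ) 1 → f x = 0) ∧ (∫ x, f x) = 1

/-- The convolution kernel estimator `f̂_h`. -/
def convEstimator (K : ℝ → ℝ) (h : ℝ) (n : ℕ) (X : Fin n → ℝ) (t : ℝ) : ℝ :=
  (1 / (n * h)) * ∑ j, K ((t - X j) / h)

/-- The `L_p([0,1])` norm, for a real exponent `p`. -/
def lpNorm1 (p : ℝ) (g : ℝ → ℝ) : ℝ :=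
  (∫ t in Set.Icc (0:ℝ) 1, |g t| ^ p) ^ (1/p)

/-- The `L_p`–`L_q` risk of an estimator. -/
def risk1 (n : ℕ) (p q : ℝ) (est : (Fin n → ℝ) → ℝ → ℝ) (f : ℝ → ℝ) : ℝ :=
  (∫ X, (lpNorm1 p fun t => est X t - f t) ^ q ∂prodLaw1 n f) ^ (1/q)

/-- The uniform density `f₀ = 1_{(0,1)}`. -/
def unifD : ℝ → ℝ := Set.indicator (Set.Ioo (0:ℝ) 1) 1

lemma densMeasure1_unifD : densMeasure1 unifD = volume.restrict (Set.Ioo (0:ℝ) 1) := by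
  have hdens : (fun x => ENNReal.ofReal (unifD x)) = (Set.Ioo (0:ℝ) 1).indicator 1 := by
    funext x
    by_cases hx : x ∈ Set.Ioo (0:ℝ) 1 <;> simp [unifD, hx]
  rw [densMeasure1, hdens, withDensity_indicator_one measurableSet_Ioo]

lemma abs_unifD_le_one (t : ℝ) : |unifD t| ≤ 1 := by
  by_cases ht : t ∈ Set.Ioo (0:ℝ) 1 <;> simp [unifD, ht]

instance : IsProbabilityMeasure (volume.restrict (Set.Ioo (0:ℝ) 1)) :=
  ⟨by simp [Real.volume_Ioo]⟩

lemma integral_convEstimator_pi {K : ℝ → ℝ} {h : ℝ} {n : ℕ} (hn : n ≠ 0)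
    (μ : Measure ℝ) [IsProbabilityMeasure μ] (t : ℝ)
    (hK : Integrable (fun x => K ((t - x) / h)) μ) :
    ∫ X, convEstimator K h n X t ∂(Measure.pi fun _ => μ)
      = h⁻¹ * ∫ x, K ((t - x) / h) ∂μ := by
  have hn' : (n : ℝ) ≠ 0 := Nat.cast_ne_zero.2 hn
  simp only [convEstimator]
  rw [integral_const_mul,
    integral_finsetSum _ fun j _ => integrable_comp_eval (μ := fun _ => μ) (i := j) hK]
  simp only [integral_comp_eval (μ := fun _ => μ) hK.aestronglyMeasurable, Finset.sum_const,
    Finset.card_univ, Fintype.card_fin, nsmul_eq_mul]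
  field_simp

lemma integral_convEstimator_unifD {K : ℝ → ℝ} (hK : Integrable K) {h : ℝ} (hh : h ≠ 0)
    {n : ℕ} (hn : n ≠ 0) (t : ℝ) :
    ∫ X, convEstimator K h n X t ∂prodLaw1 n unifD = ∫ v in (t - 1) / h..t / h, K v := by
  have hKt : Integrable (fun x => K ((t - x) / h)) := by
    simpa only [div_eq_mul_inv] using
      ((integrable_comp_mul_right_iff K (inv_ne_zero hh)).2 hK).comp_sub_left t
  rw [prodLaw1, densMeasure1_unifD, integral_convEstimator_pi hn _ t hKt.restrict,
    ← integral_Ioc_eq_integral_Ioo, ← intervalIntegral.integral_of_le zero_le_one,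
    intervalIntegral.integral_comp_sub_left (fun y => K (y / h)) t, sub_zero,
    intervalIntegral.inv_mul_integral_comp_div]

lemma continuous_intervalIntegral_of_integrable {K : ℝ → ℝ} (hK : Integrable K)
    {a b : ℝ → ℝ} (ha : Continuous a) (hb : Continuous b) :
    Continuous fun t => ∫ v in a t..b t, K v := by
  have hF : Continuous fun s => ∫ v in (0:ℝ)..s, K v :=
    intervalIntegral.continuous_primitive (fun _ _ => hK.intervalIntegrable) 0
  refine ((hF.comp hb).sub (hF.comp ha)).congr fun t => ?_
  exact intervalIntegral.integral_interval_sub_left hK.intervalIntegrable hK.intervalIntegrable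

lemma abs_intervalIntegral_le_integral_abs {K : ℝ → ℝ} (hK : Integrable K) (a b : ℝ) :
    |∫ v in a..b, K v| ≤ ∫ v, |K v| :=
  (intervalIntegral.norm_integral_le_integral_norm_uIoc).trans
    (setIntegral_le_integral hK.norm (Eventually.of_forall fun _ => norm_nonneg _))

lemma intervalIntegral_eq_integral_Icc_of_support {K : ℝ → ℝ} (hK : Integrable K)
    (hKsupp : ∀ u, u ∉ Set.Icc (-1:ℝ) 1 → K u = 0) {a b : ℝ} (ha : a ≤ -1)
    (hb : -1 ≤ b) :
    ∫ v in a..b, K v = ∫ v in Set.Icc (-1:ℝ) b, K v := by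
  have hleft : ∫ v in a..(-1), K v = 0 := by
    rw [intervalIntegral.integral_of_le ha, integral_Ioc_eq_integral_Ioo]
    exact setIntegral_eq_zero_of_forall_eq_zero fun x hx =>
      hKsupp x fun hx' => hx.2.not_ge hx'.1
  rw [← intervalIntegral.integral_add_adjacent_intervals hK.intervalIntegrable
    hK.intervalIntegrable, hleft, zero_add, intervalIntegral.integral_of_le hb,
    integral_Icc_eq_integral_Ioc]

lemma rpow_mul_le_lpNorm1 {p c : ℝ} (hp : 0 < p) (hc : 0 ≤ c) {g : ℝ → ℝ}
    (hg : IntegrableOn (fun t => |g t| ^ p) (Set.Icc 0 1)) {s : Set ℝ} (hs : MeasurableSet s)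
    (hs01 : s ⊆ Set.Icc 0 1) (hgs : ∀ t ∈ s, c ≤ |g t|) :
    volume.real s ^ (1/p) * c ≤ lpNorm1 p g := by
  have hsfin : volume s < ⊤ := (measure_mono hs01).trans_lt (by simp)
  have hcp : (c ^ p) ^ (1/p) = c := by
    rw [← Real.rpow_mul hc, mul_one_div_cancel hp.ne', Real.rpow_one]
  calc volume.real s ^ (1/p) * c = (∫ _ in s, c ^ p) ^ (1/p) := by
        rw [setIntegral_const, smul_eq_mul, Real.mul_rpow measureReal_nonneg
          (Real.rpow_nonneg hc _), hcp]
    _ ≤ lpNorm1 p g := by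
        refine Real.rpow_le_rpow (setIntegral_nonneg hs fun _ _ => Real.rpow_nonneg hc _) ?_
          (by positivity)
        calc ∫ _ in s, c ^ p ≤ ∫ t in s, |g t| ^ p :=
              setIntegral_mono_on (integrableOn_const hsfin.ne) (hg.mono_set hs01) hs
                fun t ht => Real.rpow_le_rpow hc (hgs t ht) hp.le
          _ ≤ ∫ t in Set.Icc 0 1, |g t| ^ p :=
              setIntegral_mono_set hg (Eventually.of_forall fun _ => Real.rpow_nonneg
                (abs_nonneg _) _) hs01.eventuallyLE

lemma integrableOn_abs_rpow_of_bounded {g : ℝ → ℝ} (hg : Measurable g) {C : ℝ}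
    (hgC : ∀ t, |g t| ≤ C) {p : ℝ} (hp : 0 ≤ p) {s : Set ℝ} (hs : volume s < ⊤) :
    IntegrableOn (fun t => |g t| ^ p) s :=
  IntegrableOn.of_bound hs (hg.abs.pow_const p).aestronglyMeasurable (C ^ p) <|
    Eventually.of_forall fun t => by
      rw [Real.norm_of_nonneg (Real.rpow_nonneg (abs_nonneg _) _)]
      exact Real.rpow_le_rpow (abs_nonneg _) (hgC t) hp

lemma le_abs_intervalIntegral_sub_unifD {K : ℝ → ℝ} (hKI : Integrable K)
    (hKsupp : ∀ u, u ∉ Set.Icc (-1:ℝ) 1 → K u = 0) {δ γ : ℝ}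
    (hK : ∀ a : ℝ, 0 ≤ a → a ≤ δ → (∫ u in Set.Icc (-1:ℝ) a, K u) ≤ 1 - γ)
    {h : ℝ} (hh : 0 < h) (hhδ : h * (1 + δ) < 1) {t : ℝ} (ht : t ∈ Set.Ioc 0 (δ * h)) :
    γ ≤ |(∫ v in (t - 1) / h..t / h, K v) - unifD t| := by
  obtain ⟨ht0, htδ⟩ := ht
  have hunif : unifD t = 1 := by
    have ht1 : t < 1 := by nlinarith
    simp [unifD, ht0, ht1]
  have hleft : (t - 1) / h ≤ -1 := by rw [div_le_iff₀ hh]; nlinarith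
  have hright : t / h ≤ δ := by rwa [div_le_iff₀ hh]
  have hmean : ∫ v in (t - 1) / h..t / h, K v ≤ 1 - γ := by
    rw [intervalIntegral_eq_integral_Icc_of_support hKI hKsupp hleft
      (by linarith [div_pos ht0 hh])]
    exact hK _ (by positivity) hright
  rw [hunif, abs_sub_comm]
  exact le_abs.2 (Or.inl (by linarith))

/-- lower bound on the integrated bias of the convolution kernel
estimator for the uniform density `f₀ = 1_{(0,1)}`. -/
theorem integrated_bias_lower_bound
    (n : ℕ) (hn : 1 ≤ n) (p : ℝ) (hp : 1 ≤ p)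
    (K : ℝ → ℝ) (hKint : (∫ u, K u) = 1)
    (hKsupp : ∀ u, u ∉ Set.Icc (-1:ℝ) 1 → K u = 0)
    (δ γ : ℝ) (hδ : δ ∈ Set.Ioo (0:ℝ) 1) (hγ : γ ∈ Set.Ioo (0:ℝ) 1)
    (hK : ∀ a : ℝ, 0 ≤ a → a ≤ δ → (∫ u in Set.Icc (-1:ℝ) a, K u) ≤ 1 - γ)
    (h : ℝ) (hh : 0 < h) (hh' : h < (1 + δ)⁻¹) :
    δ ^ (1/p) * γ * h ^ (1/p)
      ≤ lpNorm1 p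
          (fun t => (∫ X, convEstimator K h n X t ∂prodLaw1 n unifD) - unifD t) := by
  have hp0 : 0 < p := zero_lt_one.trans_le hp
  -- `∫ K = 1` forces integrability: a non-integrable function has Bochner integral `0`.
  have hKI : Integrable K := by
    by_contra hKI
    exact zero_ne_one (integral_undef hKI ▸ hKint)
  have hhδ : h * (1 + δ) < 1 := by
    rwa [inv_eq_one_div, lt_div_iff₀ (by linarith [hδ.1])] at hh'
  simp only [integral_convEstimator_unifD hKI hh.ne' (by omega : n ≠ 0)]
  have hmeas : Measurable fun t => (∫ v in (t - 1) / h..t / h, K v) - unifD t :=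
    (continuous_intervalIntegral_of_integrable hKI (by fun_prop) (by fun_prop)).measurable.sub
      (measurable_one.indicator measurableSet_Ioo)
  have hbound : ∀ t, |(∫ v in (t - 1) / h..t / h, K v) - unifD t| ≤ (∫ v, |K v|) + 1 :=
    fun t => (abs_sub _ _).trans
      (add_le_add (abs_intervalIntegral_le_integral_abs hKI _ _) (abs_unifD_le_one t))
  have hint : IntegrableOn (fun t => |(∫ v in (t - 1) / h..t / h, K v) - unifD t| ^ p)
      (Set.Icc 0 1) :=
    integrableOn_abs_rpow_of_bounded hmeas hbound hp0.le (by simp)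
  calc δ ^ (1/p) * γ * h ^ (1/p) = volume.real (Set.Ioc 0 (δ * h)) ^ (1/p) * γ := by
        rw [Real.volume_real_Ioc_of_le (mul_pos hδ.1 hh).le, sub_zero,
          Real.mul_rpow hδ.1.le hh.le]
        ring
    _ ≤ _ := rpow_mul_le_lpNorm1 hp0 hγ.1.le hint measurableSet_Ioc
        (Set.Ioc_subset_Icc_self.trans (Set.Icc_subset_Icc_right (by nlinarith [hδ.1])))
        fun t => le_abs_intervalIntegral_sub_unifD hKI hKsupp hK hh hhδ

end Adaptive
end
end

section
/- L_2-optimality of the Legendre kernels: for every m∈ℕ*, w_m minimizes the L_2([0,1]) norm among all kernels of order m; that is, for every w∈𝒲 of order m, (∫_0^1 w(u)² du)^{1/2} ≥ (∫_0^1 w_m(u)² du)^{1/2} = m+1. -/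
/-!
Let `P_k` be the shifted Legendre polynomials, normalised by `P_k(0) = 1`. On `[0,1]` the kernel
`w_m` is the polynomial `K = ∑_{k ≤ m} (2k+1) P_k`. Rodrigues' formula and `k`-fold integration by
parts make the `P_k` orthogonal on `[0,1]` and reduce `∫ P_k²` to the Beta integral
`∫ x^k (1-x)^k = k!² / (2k+1)!`, giving `∫ P_k² = 1/(2k+1)`. Hence `∫ K P_k = 1` for `k ≤ m` and
`∫ K² = ∑_{k ≤ m} (2k+1) = (m+1)²`. A kernel `w` of order `m` integrates every polynomial `p` of
degree `≤ m` to `p(0)`, so `∫ w K = K(0) = (m+1)² = ∫ K²`, and `0 ≤ ∫ (w - K)² = ∫ w² - ∫ K²`.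
-/

open MeasureTheory Real Filter

noncomputable section

namespace Adaptive

/-- The class `𝒲` of bounded univariate kernels supported in `[0,1]`. -/
def MemW (W : ℝ → ℝ) : Prop :=
  (∃ C, ∀ u ∈ Set.Icc (0:ℝ) 1, |W u| ≤ C) ∧
  (∀ u, u ∉ Set.Icc (0:ℝ) 1 → W u = 0) ∧
  (∫ u in Set.Icc (0:ℝ) 1, W u) = 1

/-- A kernel of order `m`. -/
def OfOrder (W : ℝ → ℝ) (m : ℕ) : Prop :=
  ∀ r : ℕ, 1 ≤ r → r ≤ m → (∫ u in Set.Icc (0:ℝ) 1, W u * u ^ r) = 0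

/-- Legendre polynomial of degree `k` on `[−1,1]` (Rodrigues formula, `Q_k(1)=1`). -/
def legendreP (k : ℕ) (x : ℝ) : ℝ :=
  (1 / (2 ^ k * (k.factorial : ℝ))) * iteratedDeriv k (fun y => (y ^ 2 - 1) ^ k) x

/-- `φ_k(u) = √(2k+1)·Q_k(2u−1)`. -/
def phiLeg (k : ℕ) (u : ℝ) : ℝ := Real.sqrt (2 * k + 1) * legendreP k (2 * u - 1)

/-- The Legendre kernel `w_m`. -/
def wKernel (m : ℕ) (u : ℝ) : ℝ :=
  if u ∈ Set.Icc (0:ℝ) 1 then ∑ r ∈ Finset.range (m + 1), phiLeg r 0 * phiLeg r u else 0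

/-- The Hilbert matrix of order `m+1`, with entries `1/(i+j−1)` for `1 ≤ i,j ≤ m+1`
(zero-indexed: `1/(i+j+1)`). -/
def hilbertMatrix (m : ℕ) : Matrix (Fin (m+1)) (Fin (m+1)) ℝ :=
  Matrix.of fun i j => 1 / ((i : ℝ) + (j : ℝ) + 1)

/-- The vector `e₀ = (1,0,…,0)ᵀ ∈ ℝ^{m+1}`. -/
def e0vec (m : ℕ) : Fin (m+1) → ℝ := fun i => if i = 0 then 1 else 0

end Adaptive

open Polynomial
open scoped Nat

namespace Polynomial

theorem iteratedDeriv_eval {𝕜 : Type*} [NontriviallyNormedField 𝕜] (p : 𝕜[X]) (n : ℕ) :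
    iteratedDeriv n (fun x => p.eval x) = fun x => (derivative^[n] p).eval x := by
  induction n with
  | zero => rfl
  | succ n ih =>
    rw [iteratedDeriv_succ, ih, Function.iterate_succ_apply']
    ext x
    exact Polynomial.deriv _

theorem eval_iterate_derivative_eq_zero_of_pow_dvd {R : Type*} [CommRing R]
    {p : R[X]} {t : R} {j k : ℕ} (hp : (X - C t) ^ k ∣ p) (hj : j < k) :
    (derivative^[j] p).eval t = 0 :=
  dvd_iff_isRoot.mp <| (dvd_pow_self _ (Nat.sub_ne_zero_of_lt hj)).trans
    (pow_sub_dvd_iterate_derivative_of_pow_dvd j hp)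

theorem iterate_derivative_eq_C_of_natDegree_le {R : Type*} [CommSemiring R]
    {p : R[X]} {n : ℕ} (hp : p.natDegree ≤ n) :
    derivative^[n] p = C ((n ! : R) * p.coeff n) := by
  rw [eq_C_of_natDegree_le_zero ((natDegree_iterate_derivative p n).trans (by omega)),
    coeff_iterate_derivative, zero_add, Nat.descFactorial_self, nsmul_eq_mul]

theorem integral_eval_mul_derivative (p q : ℝ[X]) (a b : ℝ) :
    ∫ x in a..b, p.eval x * (derivative q).eval x =
      p.eval b * q.eval b - p.eval a * q.eval a - ∫ x in a..b, (derivative p).eval x * q.eval x :=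
  intervalIntegral.integral_mul_deriv_eq_deriv_mul (fun x _ => p.hasDerivAt x)
    (fun x _ => q.hasDerivAt x) ((derivative p).continuous.intervalIntegrable _ _)
    ((derivative q).continuous.intervalIntegrable _ _)

theorem integral_eval_mul_iterate_derivative (p h : ℝ[X]) {a b : ℝ} {k : ℕ}
    (ha : ∀ j < k, (derivative^[j] h).eval a = 0) (hb : ∀ j < k, (derivative^[j] h).eval b = 0) :
    ∫ x in a..b, p.eval x * (derivative^[k] h).eval x =
      (-1) ^ k * ∫ x in a..b, (derivative^[k] p).eval x * h.eval x := by
  suffices ∀ i ≤ k, ∫ x in a..b, p.eval x * (derivative^[k] h).eval x =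
      (-1) ^ i * ∫ x in a..b, (derivative^[i] p).eval x * (derivative^[k - i] h).eval x by
    simpa using this k le_rfl
  intro i hi
  induction i with
  | zero => simp
  | succ i ih =>
    obtain ⟨l, hl⟩ : ∃ l, k - i = l + 1 := ⟨k - i - 1, by omega⟩
    rw [ih (by omega), hl, Function.iterate_succ_apply', integral_eval_mul_derivative,
      ha l (by omega), hb l (by omega), show k - (i + 1) = l by omega,
      ← Function.iterate_succ_apply' derivative]
    ring

end Polynomial

theorem integral_pow_mul_one_sub_pow (a b : ℕ) :
    ∫ x in (0:ℝ)..1, x ^ a * (1 - x) ^ b = (a ! * b ! : ℝ) / (a + b + 1)! := by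
  induction b generalizing a with
  | zero =>
    simp only [pow_zero, mul_one, integral_pow, Nat.factorial_succ, add_zero]
    push_cast
    field_simp
    norm_num
  | succ b ih =>
    have hsplit : ∀ x : ℝ,
        x ^ a * (1 - x) ^ (b + 1) = x ^ a * (1 - x) ^ b - x ^ (a + 1) * (1 - x) ^ b :=
      fun x => by ring
    simp_rw [hsplit]
    rw [intervalIntegral.integral_sub (Continuous.intervalIntegrable (by fun_prop) _ _)
      (Continuous.intervalIntegrable (by fun_prop) _ _), ih, ih,
      show a + 1 + b + 1 = a + b + 1 + 1 by omega, show a + (b + 1) + 1 = a + b + 1 + 1 by omega,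
      Nat.factorial_succ (a + b + 1), Nat.factorial_succ a, Nat.factorial_succ b]
    push_cast
    field_simp
    ring

theorem MeasureTheory.integral_sq_le_of_integral_mul_eq {α : Type*} [MeasurableSpace α]
    {μ : Measure α} {f g : α → ℝ} (hf : MemLp f 2 μ) (hg : MemLp g 2 μ)
    (h : ∫ x, f x * g x ∂μ = ∫ x, g x ^ 2 ∂μ) :
    ∫ x, g x ^ 2 ∂μ ≤ ∫ x, f x ^ 2 ∂μ := by
  have hfg : Integrable (fun x => 2 * (f x * g x)) μ := (hf.integrable_mul hg).const_mul 2
  have expand : ∫ x, (f x - g x) ^ 2 ∂μ = ∫ x, f x ^ 2 ∂μ - ∫ x, g x ^ 2 ∂μ := by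
    simp_rw [fun x => show (f x - g x) ^ 2 = f x ^ 2 - 2 * (f x * g x) + g x ^ 2 by ring]
    have hsub : Integrable (fun x => f x ^ 2 - 2 * (f x * g x)) μ := hf.integrable_sq.sub hfg
    rw [integral_add hsub hg.integrable_sq,
      integral_sub hf.integrable_sq hfg, integral_const_mul, h]
    ring
  have hnonneg : 0 ≤ ∫ x, (f x - g x) ^ 2 ∂μ := integral_nonneg fun x => sq_nonneg _
  linarith

namespace Adaptive

/-- Mathlib's `shiftedLegendre k` is `Q_k(1 - 2x)`, with `(-1)ᵏ` relative to `Q_k(2x - 1)`. -/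
def shiftedLegendreReal (k : ℕ) : ℝ[X] := (shiftedLegendre k).map (Int.castRingHom ℝ)

theorem natCast_mul_shiftedLegendreReal (k : ℕ) :
    (k ! : ℝ[X]) * shiftedLegendreReal k = derivative^[k] (X ^ k * (1 - X) ^ k) := by
  have := congrArg (Polynomial.map (Int.castRingHom ℝ)) (factorial_mul_shiftedLegendre_eq k)
  simpa [← iterate_derivative_map, shiftedLegendreReal] using this

theorem shiftedLegendreReal_eval_zero (k : ℕ) : (shiftedLegendreReal k).eval 0 = 1 := by
  simp [shiftedLegendreReal, ← coeff_zero_eq_eval_zero, coeff_shiftedLegendre]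

theorem natDegree_shiftedLegendreReal_le (k : ℕ) : (shiftedLegendreReal k).natDegree ≤ k :=
  (natDegree_map_le).trans (natDegree_shiftedLegendre k).le

theorem coeff_shiftedLegendreReal_self (k : ℕ) :
    (shiftedLegendreReal k).coeff k = (-1) ^ k * (2 * k).choose k := by
  simp [shiftedLegendreReal, coeff_shiftedLegendre, two_mul]

theorem legendreP_two_mul_sub_one (k : ℕ) (u : ℝ) :
    legendreP k (2 * u - 1) = (-1) ^ k * (shiftedLegendreReal k).eval u := by
  set f : ℝ → ℝ := fun y => (y ^ 2 - 1) ^ k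
  have chain :
      iteratedDeriv k (fun y => f (2 * y - 1)) u = 2 ^ k * iteratedDeriv k f (2 * u - 1) := by
    have := iteratedDeriv_comp_const_mul (n := k) (f := fun z => f (z - 1)) (by fun_prop) 2
    rw [iteratedDeriv_comp_sub_const] at this
    exact congrFun this u
  have rodrigues : iteratedDeriv k (fun y => f (2 * y - 1)) u =
      (-4) ^ k * (k ! * (shiftedLegendreReal k).eval u) := by
    have hf : (fun y => f (2 * y - 1)) =
        fun y => (C ((-4 : ℝ) ^ k) * (X ^ k * (1 - X) ^ k)).eval y := by
      ext y
      simp only [f, eval_mul, eval_C, eval_pow, eval_X, eval_sub, eval_one]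
      rw [← mul_pow, ← mul_pow]
      ring
    rw [hf, iteratedDeriv_eval, iterate_derivative_C_mul, ← natCast_mul_shiftedLegendreReal]
    simp
  have key : iteratedDeriv k f (2 * u - 1) = (-2) ^ k * (k ! * (shiftedLegendreReal k).eval u) := by
    apply mul_left_cancel₀ (pow_ne_zero k (two_ne_zero' ℝ))
    rw [← chain, rodrigues, ← mul_assoc (2 ^ k), ← mul_pow]
    norm_num
  rw [legendreP, key, neg_pow (2 : ℝ)]
  field_simp

theorem phiLeg_zero_mul_phiLeg (k : ℕ) (u : ℝ) :
    phiLeg k 0 * phiLeg k u = (2 * k + 1) * (shiftedLegendreReal k).eval u := by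
  have hsqrt : √(2 * k + 1 : ℝ) * √(2 * k + 1) = 2 * k + 1 := Real.mul_self_sqrt (by positivity)
  have hsign : ((-1 : ℝ) ^ k) ^ 2 = 1 := by rw [← pow_mul, Even.neg_one_pow ⟨k, by ring⟩]
  rw [phiLeg, phiLeg, legendreP_two_mul_sub_one, legendreP_two_mul_sub_one,
    shiftedLegendreReal_eval_zero]
  linear_combination ((-1 : ℝ) ^ k) ^ 2 * (shiftedLegendreReal k).eval u * hsqrt +
    (2 * k + 1) * (shiftedLegendreReal k).eval u * hsign

theorem sum_range_two_mul_add_one (n : ℕ) : ∑ k ∈ Finset.range n, (2 * k + 1 : ℝ) = n ^ 2 := by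
  induction n with
  | zero => simp
  | succ n ih => rw [Finset.sum_range_succ, ih]; push_cast; ring

def legendreKernel (m : ℕ) : ℝ[X] :=
  ∑ k ∈ Finset.range (m + 1), C (2 * k + 1 : ℝ) * shiftedLegendreReal k

theorem wKernel_eq_eval_legendreKernel (m : ℕ) {u : ℝ} (hu : u ∈ Set.Icc (0:ℝ) 1) :
    wKernel m u = (legendreKernel m).eval u := by
  simp [wKernel, hu, legendreKernel, eval_finsetSum, phiLeg_zero_mul_phiLeg]

theorem legendreKernel_eval_zero (m : ℕ) : (legendreKernel m).eval 0 = (m + 1) ^ 2 := by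
  simp [legendreKernel, eval_finsetSum, shiftedLegendreReal_eval_zero,
    sum_range_two_mul_add_one]

theorem natDegree_legendreKernel_le (m : ℕ) : (legendreKernel m).natDegree ≤ m :=
  natDegree_sum_le_of_forall_le _ _ fun k hk => (natDegree_C_mul_le _ _).trans <|
    (natDegree_shiftedLegendreReal_le k).trans (Nat.lt_succ_iff.mp (Finset.mem_range.mp hk))

theorem integral_mul_shiftedLegendreReal (q : ℝ[X]) (k : ℕ) :
    ∫ x in (0:ℝ)..1, q.eval x * (shiftedLegendreReal k).eval x =
      (-1) ^ k / k ! * ∫ x in (0:ℝ)..1, (derivative^[k] q).eval x * (x ^ k * (1 - x) ^ k) := by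
  have hP : ∀ x, (shiftedLegendreReal k).eval x =
      (derivative^[k] (X ^ k * (1 - X) ^ k : ℝ[X])).eval x / k ! := fun x => by
    rw [← natCast_mul_shiftedLegendreReal, eval_mul, eval_natCast]
    field_simp
  have h0 : (X - C 0) ^ k ∣ (X ^ k * (1 - X) ^ k : ℝ[X]) := by simp
  have h1 : (X - C 1) ^ k ∣ (X ^ k * (1 - X) ^ k : ℝ[X]) :=
    (pow_dvd_pow_of_dvd ⟨-1, by rw [C_1]; ring⟩ k).mul_left _
  simp_rw [hP, mul_div_assoc', intervalIntegral.integral_div,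
    integral_eval_mul_iterate_derivative q _
      (fun _ hj => eval_iterate_derivative_eq_zero_of_pow_dvd h0 hj)
      (fun _ hj => eval_iterate_derivative_eq_zero_of_pow_dvd h1 hj)]
  simp only [eval_mul, eval_pow, eval_X, eval_sub, eval_one]
  ring

theorem integral_shiftedLegendreReal_mul_of_lt {j k : ℕ} (h : j < k) :
    ∫ x in (0:ℝ)..1, (shiftedLegendreReal j).eval x * (shiftedLegendreReal k).eval x = 0 := by
  rw [integral_mul_shiftedLegendreReal,
    iterate_derivative_eq_zero ((natDegree_shiftedLegendreReal_le j).trans_lt h)]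
  simp

theorem integral_shiftedLegendreReal_mul_self (k : ℕ) :
    ∫ x in (0:ℝ)..1, (shiftedLegendreReal k).eval x * (shiftedLegendreReal k).eval x =
      (2 * k + 1 : ℝ)⁻¹ := by
  have hchoose : ((2 * k).choose k * k ! * k ! : ℝ) = (2 * k)! := by
    exact_mod_cast two_mul k ▸ Nat.add_choose_mul_factorial_mul_factorial k k
  rw [integral_mul_shiftedLegendreReal,
    iterate_derivative_eq_C_of_natDegree_le (natDegree_shiftedLegendreReal_le k),
    coeff_shiftedLegendreReal_self]
  simp only [eval_C]
  rw [intervalIntegral.integral_const_mul, integral_pow_mul_one_sub_pow, ← two_mul,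
    Nat.factorial_succ]
  have hsign : ((-1 : ℝ) ^ k) ^ 2 = 1 := by rw [← pow_mul, Even.neg_one_pow ⟨k, by ring⟩]
  have hpos : ((2 * k).choose k : ℝ) ≠ 0 := by exact_mod_cast (Nat.choose_pos (by omega)).ne'
  push_cast
  rw [← hchoose]
  field_simp
  linear_combination hsign

theorem integral_shiftedLegendreReal_mul (j k : ℕ) :
    ∫ x in (0:ℝ)..1, (shiftedLegendreReal j).eval x * (shiftedLegendreReal k).eval x =
      if j = k then (2 * k + 1 : ℝ)⁻¹ else 0 := by
  rcases lt_trichotomy j k with h | rfl | h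
  · rw [if_neg h.ne, integral_shiftedLegendreReal_mul_of_lt h]
  · rw [if_pos rfl, integral_shiftedLegendreReal_mul_self]
  · simp_rw [if_neg h.ne', mul_comm (eval _ (shiftedLegendreReal j))]
    exact integral_shiftedLegendreReal_mul_of_lt h

theorem integral_legendreKernel_mul_shiftedLegendreReal {m k : ℕ} (hk : k ≤ m) :
    ∫ x in (0:ℝ)..1, (legendreKernel m).eval x * (shiftedLegendreReal k).eval x = 1 := by
  simp_rw [legendreKernel, eval_finsetSum, Finset.sum_mul, eval_mul, eval_C, mul_assoc]
  rw [intervalIntegral.integral_finsetSum fun _ _ => Continuous.intervalIntegrable (by fun_prop) _ _]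
  simp_rw [intervalIntegral.integral_const_mul, integral_shiftedLegendreReal_mul, mul_ite, mul_zero]
  rw [Finset.sum_ite_eq', if_pos (Finset.mem_range.mpr (by omega))]
  exact mul_inv_cancel₀ (by positivity)

theorem integral_legendreKernel_sq (m : ℕ) :
    ∫ x in (0:ℝ)..1, (legendreKernel m).eval x ^ 2 = (m + 1) ^ 2 := by
  simp_rw [sq]
  nth_rw 2 [legendreKernel]
  simp_rw [eval_finsetSum, Finset.mul_sum, eval_mul, eval_C, mul_left_comm _ (2 * _ + 1 : ℝ)]
  rw [intervalIntegral.integral_finsetSum fun _ _ => Continuous.intervalIntegrable (by fun_prop) _ _]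
  simp_rw [intervalIntegral.integral_const_mul]
  rw [Finset.sum_congr rfl fun k hk => by
      rw [integral_legendreKernel_mul_shiftedLegendreReal
        (Nat.lt_succ_iff.mp (Finset.mem_range.mp hk)), mul_one],
    sum_range_two_mul_add_one]
  push_cast
  ring

theorem MemW.memLp {w : ℝ → ℝ} (hw : MemW w) (p : ENNReal) :
    MemLp w p (volume.restrict (Set.Icc 0 1)) := by
  obtain ⟨⟨C, hC⟩, -, hint⟩ := hw
  have hw : Integrable w (volume.restrict (Set.Icc 0 1)) :=
    Integrable.of_integral_ne_zero (by rw [hint]; exact one_ne_zero)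
  exact .of_bound hw.aestronglyMeasurable C (ae_restrict_of_forall_mem measurableSet_Icc hC)

theorem MemW.integral_mul_eval_of_ofOrder {w : ℝ → ℝ} {m : ℕ} (hw : MemW w) (ho : OfOrder w m)
    {p : ℝ[X]} (hp : p.natDegree ≤ m) :
    ∫ u in Set.Icc (0:ℝ) 1, w u * p.eval u = p.eval 0 := by
  have hmoment : ∀ n, Integrable (fun u => w u * u ^ n) (volume.restrict (Set.Icc 0 1)) := fun n =>
    (hw.memLp ⊤).integrable_mul (memLp_one_iff_integrable.2 (continuous_pow n).integrableOn_Icc)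
  rw [← coeff_zero_eq_eval_zero]
  simp_rw [eval_eq_sum_range' (Nat.lt_succ_of_le hp), Finset.mul_sum, mul_left_comm (w _)]
  rw [integral_finsetSum _ fun n _ => (hmoment n).const_mul _]
  simp_rw [integral_const_mul]
  rw [Finset.sum_eq_single_of_mem 0 (by simp) fun n hn h0 => by
    rw [ho n (Nat.one_le_iff_ne_zero.mpr h0) (Nat.lt_succ_iff.mp (Finset.mem_range.mp hn)),
      mul_zero]]
  simp [hw.2.2, coeff_zero_eq_eval_zero]

theorem wKernel_l2_optimal_general (m : ℕ) :
    (∫ u in Set.Icc (0:ℝ) 1, wKernel m u ^ 2) ^ ((1:ℝ)/2) = (m : ℝ) + 1 ∧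
    ∀ w : ℝ → ℝ, MemW w → OfOrder w m →
      (∫ u in Set.Icc (0:ℝ) 1, wKernel m u ^ 2) ^ ((1:ℝ)/2)
        ≤ (∫ u in Set.Icc (0:ℝ) 1, w u ^ 2) ^ ((1:ℝ)/2) := by
  set K := legendreKernel m
  have hK : ∫ u in Set.Icc (0:ℝ) 1, wKernel m u ^ 2 = ∫ u in Set.Icc (0:ℝ) 1, K.eval u ^ 2 :=
    setIntegral_congr_fun measurableSet_Icc fun u hu => by rw [wKernel_eq_eval_legendreKernel m hu]
  have hK2 : ∫ u in Set.Icc (0:ℝ) 1, K.eval u ^ 2 = (m + 1) ^ 2 := by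
    rw [integral_Icc_eq_integral_Ioc, ← intervalIntegral.integral_of_le zero_le_one,
      integral_legendreKernel_sq]
  have hroot : (((m : ℝ) + 1) ^ 2) ^ ((1:ℝ)/2) = m + 1 := by
    rw [← sqrt_eq_rpow, sqrt_sq (by positivity)]
  refine ⟨by rw [hK, hK2, hroot], fun w hw ho => ?_⟩
  have hKmemLp : MemLp (fun u => K.eval u) 2 (volume.restrict (Set.Icc 0 1)) :=
    (memLp_two_iff_integrable_sq K.continuous.aestronglyMeasurable).2
      (Continuous.integrableOn_Icc (by fun_prop))
  rw [hK]
  refine rpow_le_rpow (integral_nonneg fun u => sq_nonneg _) ?_ (by norm_num)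
  apply integral_sq_le_of_integral_mul_eq (hw.memLp 2) hKmemLp
  rw [hw.integral_mul_eval_of_ofOrder ho (natDegree_legendreKernel_le m), legendreKernel_eval_zero,
    hK2]

/-- `w_m` minimizes the `L₂([0,1])` norm among all kernels of
order `m` in `𝒲`, and its `L₂` norm equals `m+1`. -/
theorem wKernel_l2_optimal (m : ℕ) (hm : 1 ≤ m) :
    (∫ u in Set.Icc (0:ℝ) 1, wKernel m u ^ 2) ^ ((1:ℝ)/2) = (m : ℝ) + 1 ∧
    ∀ w : ℝ → ℝ, MemW w → OfOrder w m →
      (∫ u in Set.Icc (0:ℝ) 1, wKernel m u ^ 2) ^ ((1:ℝ)/2)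
        ≤ (∫ u in Set.Icc (0:ℝ) 1, w u ^ 2) ^ ((1:ℝ)/2) :=
  wKernel_l2_optimal_general m

end Adaptive
end
end
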